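/- arXiv:1007.1593 — 4 statements merged into one kernel-verified Lean document; each statement's English description precedes it below -/
import Mathlib

section
/- If a point p of S is dominated by some point q belonging to layer i of the maxima layers of S, then p belongs to some layer j with j > i. -/
open scoped Classical

def dominates {d : ℕ} (q p : Fin d → ℝ) : Prop := p ≤ q ∧ q ≠ p

noncomputable def maxima {d : ℕ} (S : Finset (Fin d → ℝ)) : Finset (Fin d → ℝ) :=
  S.filter fun p => ¬ ∃ q ∈ S, dominates q p

noncomputable def residLom {d : ℕ} (S : Finset (Fin d → ℝ)) : ℕ → Finset (Fin d → ℝ)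
  | 0 => S
  | i + 1 => residLom S i \ maxima (residLom S i)

noncomputable def layer {d : ℕ} (S : Finset (Fin d → ℝ)) (i : ℕ) : Finset (Fin d → ℝ) :=
  maxima (residLom S i)

/-! The residual sets `residLom S k` decrease, and strictly while nonempty, so every point of `S`
leaves them at some step `j + 1`; it then lies in layer `j`. A point `p` dominated by `q ∈ layer S i`
is still in `residLom S i` and is not maximal there, so it survives into `residLom S (i + 1)` and
its layer index is at least `i + 1`. -/

open Finset

variable {d : ℕ}

theorem maxima_subset (T : Finset (Fin d → ℝ)) : maxima T ⊆ T :=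
  filter_subset _ _

theorem maxima_nonempty {T : Finset (Fin d → ℝ)} (hT : T.Nonempty) : (maxima T).Nonempty := by
  obtain ⟨m, hm, hmax⟩ := T.exists_maximal hT
  refine ⟨m, mem_filter.mpr ⟨hm, ?_⟩⟩
  rintro ⟨r, hr, hmr, hne⟩
  exact hne (le_antisymm (hmax hr hmr) hmr)

theorem notMem_maxima_of_dominates {T : Finset (Fin d → ℝ)} {p q : Fin d → ℝ} (hq : q ∈ T)
    (hdom : dominates q p) : p ∉ maxima T :=
  fun hp => (mem_filter.mp hp).2 ⟨q, hq, hdom⟩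

namespace residLom

variable (S : Finset (Fin d → ℝ))

theorem mem_succ_iff {k : ℕ} {p : Fin d → ℝ} :
    p ∈ residLom S (k + 1) ↔ p ∈ residLom S k ∧ p ∉ layer S k :=
  mem_sdiff

theorem antitone : Antitone (residLom S) :=
  antitone_nat_of_succ_le fun _ => sdiff_subset

theorem card_succ_le (k : ℕ) : #(residLom S (k + 1)) ≤ #(residLom S k) - 1 := by
  rcases (residLom S k).eq_empty_or_nonempty with hempty | hne
  · simp [residLom, hempty]
  · obtain ⟨m, hm⟩ := maxima_nonempty hne
    have hsub : residLom S (k + 1) ⊆ (residLom S k).erase m := fun x hx =>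
      mem_erase.mpr ⟨fun hxm => (mem_sdiff.mp hx).2 (hxm ▸ hm), (mem_sdiff.mp hx).1⟩
    simpa [card_erase_of_mem (maxima_subset _ hm)] using card_le_card hsub

theorem card_le (k : ℕ) : #(residLom S k) ≤ #S - k := by
  induction k with
  | zero => rfl
  | succ k ih => have := card_succ_le S k; omega

theorem apply_card_eq_empty : residLom S #S = ∅ :=
  card_eq_zero.mp (by simpa using card_le S #S)

theorem exists_mem_layer {k : ℕ} {p : Fin d → ℝ} (hp : p ∈ residLom S k) :
    ∃ j, k ≤ j ∧ p ∈ layer S j := by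
  have hleaves : ∃ n, p ∉ residLom S n := ⟨#S, by simp [apply_card_eq_empty]⟩
  obtain ⟨j, hj⟩ : ∃ j, Nat.find hleaves = j + 1 :=
    Nat.exists_eq_succ_of_ne_zero fun h0 =>
      Nat.find_spec hleaves (h0 ▸ antitone S (Nat.zero_le k) hp)
  have hpj : p ∈ residLom S j := by
    simpa using Nat.find_min hleaves (hj ▸ Nat.lt_succ_self j)
  have hexit : p ∉ residLom S (j + 1) := hj ▸ Nat.find_spec hleaves
  refine ⟨j, ?_, by simpa [mem_succ_iff, hpj] using hexit⟩
  by_contra! hjk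
  exact hexit (antitone S hjk hp)

theorem mem_succ_of_dominates {k : ℕ} {p q : Fin d → ℝ} (hp : p ∈ S) (hq : q ∈ residLom S k)
    (hdom : dominates q p) : p ∈ residLom S (k + 1) := by
  refine (mem_succ_iff S).mpr ⟨?_, notMem_maxima_of_dominates hq hdom⟩
  induction k with
  | zero => exact hp
  | succ k ih =>
    have hqk : q ∈ residLom S k := antitone S k.le_succ hq
    exact (mem_succ_iff S).mpr ⟨ih hqk, notMem_maxima_of_dominates hqk hdom⟩

end residLom

/-- If a point `p` of `S` is dominated by a point `q` in layer `i`, then `p` belongs to a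
layer `j` with `j > i`. -/
theorem stmt2 {d : ℕ} (S : Finset (Fin d → ℝ)) (p q : Fin d → ℝ) (i : ℕ)
    (hp : p ∈ S) (hq : q ∈ layer S i) (hdom : dominates q p) :
    ∃ j : ℕ, i < j ∧ p ∈ layer S j := by
  have hp_succ : p ∈ residLom S (i + 1) :=
    residLom.mem_succ_of_dominates S hp (maxima_subset _ hq) hdom
  exact residLom.exists_mem_layer S hp_succ
end

section
/- If a point p of S dominates some point q belonging to layer k of the maxima layers of S, then p belongs to some layer j with j ≤ k. -/
/-! A point dominating `q` cannot lie in the residual set of which `q` is a maximum, so it was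
peeled off at an earlier stage: in fact `j < k`. -/

open scoped Classical

section Layers

variable {d : ℕ} (S : Finset (Fin d → ℝ)) {p q : Fin d → ℝ}

lemma notMem_residLom_of_dominates {k : ℕ} (hq : q ∈ layer S k) (hdom : dominates p q) :
    p ∉ residLom S k :=
  fun hp => (Finset.mem_filter.mp hq).2 ⟨p, hp, hdom⟩

lemma exists_lt_mem_layer_of_notMem_residLom (hp : p ∈ S) :
    ∀ {k : ℕ}, p ∉ residLom S k → ∃ j < k, p ∈ layer S j
  | 0, h => absurd hp h
  | k + 1, h => by
    by_cases hk : p ∈ residLom S k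
    · have hlayer : p ∈ layer S k := by
        by_contra hnot
        exact h (Finset.mem_sdiff.mpr ⟨hk, hnot⟩)
      exact ⟨k, k.lt_succ_self, hlayer⟩
    · obtain ⟨j, hj, hpj⟩ := exists_lt_mem_layer_of_notMem_residLom hp hk
      exact ⟨j, hj.trans k.lt_succ_self, hpj⟩

end Layers

/-- If a point `p` of `S` dominates a point `q` in layer `k`, then `p` belongs to a layer
`j` with `j ≤ k`. -/
theorem stmt3 {d : ℕ} (S : Finset (Fin d → ℝ)) (p q : Fin d → ℝ) (k : ℕ)
    (hp : p ∈ S) (hq : q ∈ layer S k) (hdom : dominates p q) :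
    ∃ j : ℕ, j ≤ k ∧ p ∈ layer S j := by
  obtain ⟨j, hj, hpj⟩ :=
    exists_lt_mem_layer_of_notMem_residLom S hp (notMem_residLom_of_dominates S hq hdom)
  exact ⟨j, hj.le, hpj⟩
end

section
/- Staircases are nested (Fact 1): if the projections P_i(v) and P_j(v) of layers i < j are both nonempty, then for any x-value at which both 2D staircases (upper-right boundaries of dominated regions) are defined, the staircase of layer i lies strictly above or equal to that of layer j; formally, if a vertical line x = c intersects staircase M_i at y-coordinate p.y and staircase M_j at q.y with i < j, then p.y > q.y. -/
theorem Finset.max_lt_max_of_forall_exists_lt {α : Type*} [LinearOrder α] {s t : Finset α}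
    (hs : s.Nonempty) (h : ∀ a ∈ s, ∃ b ∈ t, a < b) : s.max < t.max := by
  obtain ⟨m, hm⟩ := Finset.max_of_nonempty hs
  obtain ⟨b, hb, hmb⟩ := h m (Finset.mem_of_max hm)
  rw [hm]
  exact (WithBot.coe_lt_coe.2 hmb).trans_le (Finset.le_max hb)

/-- Fact 1 (staircases are nested): if every point of `Q` (the projected layer `j`) is
2D-dominated by some point of `P` (the projected layer `i`, `i < j`), the points have
pairwise distinct y-coordinates, and the vertical line `x = c` cuts the staircase of `Q`,
then the staircase of `P` is strictly above that of `Q` at `x = c` (heights compared as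
`Finset.max` in `WithBot ℝ`). -/
theorem stmt9 (P Q : Finset (ℝ × ℝ)) (c : ℝ)
    (hdom : ∀ q ∈ Q, ∃ p ∈ P, q.1 ≤ p.1 ∧ q.2 ≤ p.2)
    (hy : ∀ p ∈ P, ∀ q ∈ Q, p.2 ≠ q.2)
    (hQ : ∃ q ∈ Q, c ≤ q.1) :
    ((Q.filter fun q => c ≤ q.1).image Prod.snd).max <
      ((P.filter fun p => c ≤ p.1).image Prod.snd).max := by
  obtain ⟨q₀, hq₀, hcq₀⟩ := hQ
  refine Finset.max_lt_max_of_forall_exists_lt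
    ⟨q₀.2, Finset.mem_image_of_mem _ (Finset.mem_filter.2 ⟨hq₀, hcq₀⟩)⟩ fun y hy' => ?_
  obtain ⟨q, hq, rfl⟩ := Finset.mem_image.1 hy'
  obtain ⟨hqQ, hcq⟩ := Finset.mem_filter.1 hq
  obtain ⟨p, hpP, hpx, hpy⟩ := hdom q hqQ
  exact ⟨p.2, Finset.mem_image_of_mem _ (Finset.mem_filter.2 ⟨hpP, hcq.trans hpx⟩),
    hpy.lt_of_ne (hy p hpP q hqQ).symm⟩
end

section
/- A segment s of staircase M_i is the predecessor segment of a query point q (i.e., the first horizontal segment hit by a downward vertical ray from q) if and only if q.x ∈ [left(s), right(s)], q.y ≥ y(s), and staircase M_{i-1} is strictly above q at x-coordinate q.x. -/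
/-- A horizontal segment is a triple `(left, right, y)`. -/
abbrev Seg := ℝ × ℝ × ℝ

/-- The segment `s` covers the x-coordinate `x`. -/
def covers (s : Seg) (x : ℝ) : Prop := s.1 ≤ x ∧ x ≤ s.2.1

/-- Membership in one of the staircases `M 0, …, M (l-1)`. -/
def InM (M : ℕ → Finset Seg) (l : ℕ) (s : Seg) : Prop := ∃ i < l, s ∈ M i

/-- `s` is the predecessor segment of `q`: the highest segment, over all staircases,
covering `q.x` and at or below `q.y`. -/
def IsPred (M : ℕ → Finset Seg) (l : ℕ) (q : ℝ × ℝ) (s : Seg) : Prop :=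
  InM M l s ∧ covers s q.1 ∧ s.2.2 ≤ q.2 ∧
    ∀ t, InM M l t → covers t q.1 → t.2.2 ≤ q.2 → t.2.2 ≤ s.2.2

def StrictlyNested (M : ℕ → Finset Seg) (l : ℕ) : Prop :=
  ∀ i j, i < j → j < l → ∀ a ∈ M i, ∀ b ∈ M j, ∀ x : ℝ,
    covers a x → covers b x → b.2.2 < a.2.2

def DomainsNested (M : ℕ → Finset Seg) (l : ℕ) : Prop :=
  ∀ i j, i < j → j < l → ∀ b ∈ M j, ∀ x : ℝ, covers b x → ∃ a ∈ M i, covers a x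

def SingleValued (M : ℕ → Finset Seg) (l : ℕ) : Prop :=
  ∀ i < l, ∀ a ∈ M i, ∀ b ∈ M i, ∀ x : ℝ, covers a x → covers b x → a.2.2 = b.2.2

section Staircases

variable {M : ℕ → Finset Seg} {l : ℕ}

theorem height_le_of_index_le (hnest : StrictlyNested M l) (hsingle : SingleValued M l)
    {i j : ℕ} (hij : i ≤ j) (hj : j < l) {a b : Seg} (ha : a ∈ M i) (hb : b ∈ M j)
    {x : ℝ} (hax : covers a x) (hbx : covers b x) : b.2.2 ≤ a.2.2 := by
  rcases hij.eq_or_lt with rfl | hij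
  · exact (hsingle i hj b hb a ha x hbx hax).le
  · exact (hnest i j hij hj a ha b hb x hax hbx).le

theorem lt_height_of_isPred (hnest : StrictlyNested M l) {q : ℝ × ℝ} {i j : ℕ} (hi : i < l)
    (hji : j + 1 = i) {s t : Seg} (hs : s ∈ M i) (ht : t ∈ M j) (htq : covers t q.1)
    (hpred : IsPred M l q s) : q.2 < t.2.2 := by
  obtain ⟨-, hsq, -, hmax⟩ := hpred
  by_contra! hty
  have hts : t.2.2 ≤ s.2.2 := hmax t ⟨j, by omega, ht⟩ htq hty
  have hst : s.2.2 < t.2.2 := hnest j i (by omega) hi t ht s hs q.1 htq hsq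
  exact hts.not_gt hst

theorem isPred_of_below_previous (hnest : StrictlyNested M l) (hdom : DomainsNested M l)
    (hsingle : SingleValued M l) {q : ℝ × ℝ} {i : ℕ} (hi : i < l) {s : Seg} (hs : s ∈ M i)
    (hsq : covers s q.1) (hsy : s.2.2 ≤ q.2)
    (habove : ∀ j, j + 1 = i → ∀ t ∈ M j, covers t q.1 → q.2 < t.2.2) :
    IsPred M l q s := by
  refine ⟨⟨i, hi, hs⟩, hsq, hsy, ?_⟩
  rintro t ⟨k, hk, htk⟩ htq hty
  rcases le_or_gt i k with hik | hki
  · exact height_le_of_index_le hnest hsingle hik hk hs htk hsq htq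
  · -- `M (i-1)` is defined at `q.x` and lies above `q`, yet weakly below `t`.
    obtain ⟨a, ha, haq⟩ := hdom (i - 1) i (by omega) hi s hs q.1 hsq
    have hqa : q.2 < a.2.2 := habove (i - 1) (by omega) a ha haq
    have hat : a.2.2 ≤ t.2.2 :=
      height_le_of_index_le hnest hsingle (by omega : k ≤ i - 1) (by omega) htk ha htq haq
    linarith

end Staircases

/-- A segment `s` of staircase `M i` is the predecessor segment of `q` iff
`q.x ∈ [left(s), right(s)]`, `q.y ≥ y(s)`, and staircase `M (i-1)` is strictly above `q`
at `x = q.x` (vacuous for the first staircase). -/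
theorem stmt12 (M : ℕ → Finset Seg) (l : ℕ)
    (hnest : ∀ i j, i < j → j < l → ∀ a ∈ M i, ∀ b ∈ M j, ∀ x : ℝ,
      covers a x → covers b x → b.2.2 < a.2.2)
    (hcover : ∀ i j, i < j → j < l → ∀ b ∈ M j, ∀ x : ℝ,
      covers b x → ∃ a ∈ M i, covers a x)
    (hstep : ∀ i < l, ∀ a ∈ M i, ∀ b ∈ M i, ∀ x : ℝ,
      covers a x → covers b x → a.2.2 = b.2.2)
    (q : ℝ × ℝ) (i : ℕ) (hi : i < l) (s : Seg) (hs : s ∈ M i) :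
    IsPred M l q s ↔
      (covers s q.1 ∧ s.2.2 ≤ q.2 ∧
        ∀ j, j + 1 = i → ∀ t ∈ M j, covers t q.1 → q.2 < t.2.2) :=
  ⟨fun hpred => ⟨hpred.2.1, hpred.2.2.1,
      fun _ hji _ ht htq => lt_height_of_isPred hnest hi hji hs ht htq hpred⟩,
    fun ⟨hsq, hsy, habove⟩ =>
      isPred_of_below_previous hnest hcover hstep hi hs hsq hsy habove⟩
end
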